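/- arXiv:2602.01409 — 2 statements merged into one kernel-verified Lean document; each statement's English description precedes it below -/
import Mathlib

section
/- Let b : ℕ → ℝ satisfy b(0) = 1 and the Hecke recursion b(1)·b(r) = b(r+1) + b(r−1) for all integers r ≥ 1. Then for every natural number m, b(1)^{2m} = Σ_{r=0}^{m} ( C(2m, m−r) − C(2m, m−r−1) ) · b(2r), where C(n, j) denotes the binomial coefficient and C(n, −1) = 0. -/
/-!
Extend `b` to all of `ℤ` by `b (-1) = 0` and `b (-r - 2) = -b r`, as for Chebyshev polynomials of
the second kind; the recursion then holds at every integer, i.e. multiplication by `b 1` acts as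
the sum of the two shifts. Expanding `(shift + shift⁻¹) ^ n` binomially gives
`b 1 ^ n = ∑_{i + j = n} C(n, i) b (i - j)`. For `n = 2 m`, antisymmetry turns the term
`i = m - r - 1` into `-C(2m, m + r + 1) b (2 r)`, which pairs with the term `i = m + r`.
-/

/-- The binomial coefficient `C(n, j)` with integer second argument,
extended by the convention `C(n, j) = 0` for `j < 0`. -/
noncomputable def binomC (n : ℕ) (j : ℤ) : ℝ :=
  if j < 0 then 0 else (n.choose j.toNat : ℝ)

open Finset

theorem binomC_eq_choose_of_add_eq {n : ℕ} {j : ℤ} {k : ℕ} (h : j + k = n) :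
    binomC n j = n.choose k := by
  unfold binomC
  split_ifs with hj
  · rw [Nat.choose_eq_zero_of_lt (by omega), Nat.cast_zero]
  · rw [Nat.choose_symm_of_eq_add (by omega : n = j.toNat + k)]

section ReflectExtend

variable {R : Type*}

def reflectExtend [Zero R] [Neg R] (b : ℕ → R) : ℤ → R
  | .ofNat n => b n
  | .negSucc 0 => 0
  | .negSucc (n + 1) => -b n

@[simp]
theorem reflectExtend_natCast [Zero R] [Neg R] (b : ℕ → R) (n : ℕ) :
    reflectExtend b n = b n :=
  rfl

@[simp]
theorem reflectExtend_neg_one [Zero R] [Neg R] (b : ℕ → R) : reflectExtend b (-1) = 0 :=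
  rfl

theorem reflectExtend_neg_sub_two [AddGroup R] (b : ℕ → R) (r : ℤ) :
    reflectExtend b (-r - 2) = -reflectExtend b r := by
  rcases r with n | _ | n
  · rw [show -Int.ofNat n - 2 = Int.negSucc (n + 1) by simp [Int.negSucc_eq]; ring]
    rfl
  · simp
  · rw [show -Int.negSucc (n + 1) - 2 = n by omega]
    simp [reflectExtend]

variable [CommRing R] {b : ℕ → R} {x : R}

theorem reflectExtend_rec_of_neg_one_le (h0 : x * b 0 = b 1)
    (hrec : ∀ r, 1 ≤ r → x * b r = b (r + 1) + b (r - 1)) {r : ℤ} (hr : -1 ≤ r) :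
    x * reflectExtend b r = reflectExtend b (r + 1) + reflectExtend b (r - 1) := by
  obtain rfl | rfl | ⟨n, rfl⟩ : r = -1 ∨ r = 0 ∨ ∃ n : ℕ, r = n + 1 := by
    rcases lt_trichotomy r 0 with h | h | h
    · exact .inl (by omega)
    · exact .inr (.inl h)
    · exact .inr (.inr ⟨r.toNat - 1, by omega⟩)
  · rw [show (-1 : ℤ) + 1 = (0 : ℕ) by rfl, show (-1 : ℤ) - 1 = -(0 : ℕ) - 2 by rfl,
      reflectExtend_neg_sub_two, reflectExtend_neg_one]
    ring
  · rw [show (0 : ℤ) = (0 : ℕ) by rfl, show ((0 : ℕ) : ℤ) + 1 = (1 : ℕ) by rfl,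
      show ((0 : ℕ) : ℤ) - 1 = -1 by rfl, reflectExtend_natCast, reflectExtend_natCast,
      reflectExtend_neg_one, add_zero, h0]
  · rw [show (n : ℤ) + 1 = (n + 1 : ℕ) by push_cast; ring,
      show ((n + 1 : ℕ) : ℤ) + 1 = (n + 2 : ℕ) by push_cast; ring,
      show ((n + 1 : ℕ) : ℤ) - 1 = n by push_cast; ring]
    simp only [reflectExtend_natCast]
    exact hrec (n + 1) (by omega)

theorem reflectExtend_rec (h0 : x * b 0 = b 1)
    (hrec : ∀ r, 1 ≤ r → x * b r = b (r + 1) + b (r - 1)) (r : ℤ) :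
    x * reflectExtend b r = reflectExtend b (r + 1) + reflectExtend b (r - 1) := by
  rcases le_or_gt (-1) r with hr | hr
  · exact reflectExtend_rec_of_neg_one_le h0 hrec hr
  · have h := reflectExtend_rec_of_neg_one_le h0 hrec (r := -r - 2) (by omega)
    rw [show -r - 2 + 1 = -(r - 1) - 2 by ring, show -r - 2 - 1 = -(r + 1) - 2 by ring] at h
    simp only [reflectExtend_neg_sub_two] at h
    linear_combination -h

end ReflectExtend

theorem pow_mul_eq_sum_antidiagonal {R : Type*} [CommRing R] {x : R} {B : ℤ → R}
    (hB : ∀ r, x * B r = B (r + 1) + B (r - 1)) (n : ℕ) (s : ℤ) :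
    x ^ n * B s = ∑ ij ∈ antidiagonal n, (n.choose ij.1 : R) * B (s + ij.1 - ij.2) := by
  induction n generalizing s with
  | zero => simp
  | succ n ih =>
    rw [sum_antidiagonal_choose_succ_mul (fun i j => B (s + i - j)), pow_succ', mul_assoc,
      mul_left_comm, hB, mul_add, ih, ih, add_comm]
    congr 1
    · refine sum_congr rfl fun ij _ => ?_
      push_cast
      ring_nf
    · refine sum_congr rfl fun ij hij => ?_
      rw [Nat.choose_symm_of_eq_add (mem_antidiagonal.mp hij).symm]
      push_cast
      ring_nf

theorem sum_antidiagonal_two_mul_of_antisymm {R : Type*} [CommRing R] {B : ℤ → R}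
    (hB : ∀ r, B (-r - 2) = -B r) (m : ℕ) :
    ∑ ij ∈ antidiagonal (2 * m), ((2 * m).choose ij.1 : R) * B (ij.1 - ij.2) =
      ∑ r ∈ range (m + 1),
        (((2 * m).choose (m + r) : R) - (2 * m).choose (m + r + 1)) * B (2 * r) := by
  rw [Nat.sum_antidiagonal_eq_sum_range_succ (fun i j => ((2 * m).choose i : R) * B (i - j)),
    Nat.succ_eq_add_one, show 2 * m + 1 = m + (m + 1) by ring, sum_range_add,
    ← sum_range_reflect _ m]
  have lower : ∀ r ∈ range m, ((2 * m).choose (m - 1 - r) : R) *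
      B ((m - 1 - r : ℕ) - (2 * m - (m - 1 - r) : ℕ)) =
        -((2 * m).choose (m + r + 1) * B (2 * r)) := by
    intro r hr
    have hr := mem_range.mp hr
    rw [Nat.choose_symm_of_eq_add (by omega : 2 * m = m - 1 - r + (m + r + 1)),
      show ((m - 1 - r : ℕ) : ℤ) - (2 * m - (m - 1 - r) : ℕ) = -(2 * r) - 2 by omega, hB, mul_neg]
  have upper : ∀ r ∈ range (m + 1), ((2 * m).choose (m + r) : R) *
      B ((m + r : ℕ) - (2 * m - (m + r) : ℕ)) = (2 * m).choose (m + r) * B (2 * r) := by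
    intro r hr
    have hr := mem_range.mp hr
    rw [show ((m + r : ℕ) : ℤ) - (2 * m - (m + r) : ℕ) = 2 * r by omega]
  rw [sum_congr rfl lower, sum_congr rfl upper, sum_neg_distrib]
  simp only [sub_mul, sum_sub_distrib]
  rw [sum_range_succ (fun r => ((2 * m).choose (m + r + 1) : R) * B (2 * r)) m,
    Nat.choose_eq_zero_of_lt (by omega : 2 * m < m + m + 1)]
  ring

theorem even_power_hecke_expansion (b : ℕ → ℝ) (hb0 : b 0 = 1)
    (hrec : ∀ r : ℕ, 1 ≤ r → b 1 * b r = b (r + 1) + b (r - 1)) :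
    ∀ m : ℕ, (b 1) ^ (2 * m) =
      ∑ r ∈ Finset.range (m + 1),
        (binomC (2 * m) ((m : ℤ) - (r : ℤ)) - binomC (2 * m) ((m : ℤ) - (r : ℤ) - 1)) *
          b (2 * r) := by
  intro m
  have hB := reflectExtend_rec (by rw [hb0, mul_one]) hrec
  calc b 1 ^ (2 * m)
      = b 1 ^ (2 * m) * reflectExtend b (0 : ℕ) := by rw [reflectExtend_natCast, hb0, mul_one]
    _ = _ := pow_mul_eq_sum_antidiagonal hB _ _
    _ = ∑ r ∈ range (m + 1), (((2 * m).choose (m + r) : ℝ) - (2 * m).choose (m + r + 1)) *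
          reflectExtend b (2 * r) := by
      simpa using sum_antidiagonal_two_mul_of_antisymm (reflectExtend_neg_sub_two b) m
    _ = _ := by
      refine sum_congr rfl fun r _ => ?_
      rw [binomC_eq_choose_of_add_eq (k := m + r) (by push_cast; ring),
        binomC_eq_choose_of_add_eq (k := m + r + 1) (by push_cast; ring),
        show (2 * r : ℤ) = (2 * r : ℕ) by push_cast; rfl, reflectExtend_natCast]
end

section
/- Let b : ℕ → ℝ satisfy b(0) = 1 and the Hecke recursion b(1)·b(r) = b(r+1) + b(r−1) for all integers r ≥ 1. Then for every natural number m, b(1)^{2m+1} = Σ_{r=0}^{m} ( C(2m+1, m−r) − C(2m+1, m−r−1) ) · b(2r+1), where C(n, j) denotes the binomial coefficient and C(n, −1) = 0. -/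
open Polynomial Polynomial.Chebyshev Finset

namespace Polynomial.Chebyshev

variable {R : Type*} [CommRing R]

theorem X_mul_S (j : ℤ) : X * S R j = S R (j + 1) + S R (j - 1) := by
  rw [S_add_one]; ring

theorem X_pow_eq_sum_antidiagonal_choose_mul_S (n : ℕ) :
    (X : R[X]) ^ n = ∑ ij ∈ antidiagonal n, (n.choose ij.1 : R[X]) * S R (ij.2 - ij.1) := by
  induction n with
  | zero => simp
  | succ n ih =>
    rw [sum_antidiagonal_choose_succ_mul (fun i j => S R ((j : ℤ) - i)), pow_succ', ih, mul_sum,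
      ← sum_add_distrib]
    refine sum_congr rfl fun ij hij => ?_
    rw [Nat.choose_symm_of_eq_add (mem_antidiagonal.mp hij).symm, mul_left_comm, X_mul_S]
    push_cast
    ring_nf

theorem X_pow_eq_sum_range_choose_mul_S (n : ℕ) :
    (X : R[X]) ^ n = ∑ k ∈ range (n + 1), (n.choose k : R[X]) * S R (n - 2 * k) := by
  rw [X_pow_eq_sum_antidiagonal_choose_mul_S, Nat.sum_antidiagonal_eq_sum_range_succ_mk]
  refine sum_congr rfl fun k hk => ?_
  rw [Nat.cast_sub (Nat.lt_succ_iff.mp (mem_range.mp hk)), sub_sub, ← two_mul]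

theorem X_pow_two_mul_add_one_eq (m : ℕ) :
    (X : R[X]) ^ (2 * m + 1) =
      ∑ r ∈ range (m + 1), ((2 * m + 1).choose (m - r) : R[X]) * S R (2 * r + 1) -
        ∑ r ∈ range m, ((2 * m + 1).choose (m - r - 1) : R[X]) * S R (2 * r + 1) := by
  set f : ℕ → R[X] := fun k => ((2 * m + 1).choose k : R[X]) * S R ((2 * m + 1 : ℕ) - 2 * k)
  have hlow : ∑ k ∈ range (m + 1), f k =
      ∑ r ∈ range (m + 1), ((2 * m + 1).choose (m - r) : R[X]) * S R (2 * r + 1) := by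
    rw [← sum_range_reflect]
    refine sum_congr rfl fun r hr => ?_
    have hr : r ≤ m := Nat.lt_succ_iff.mp (mem_range.mp hr)
    simp only [f, show m + 1 - 1 - r = m - r by omega]
    congr 2
    push_cast [hr]
    ring
  have hhigh : ∑ i ∈ range (m + 1), f (m + 1 + i) =
      -∑ r ∈ range m, ((2 * m + 1).choose (m - r - 1) : R[X]) * S R (2 * r + 1) := by
    have hmid : f (m + 1 + 0) = 0 := by
      simp only [f]
      rw [show ((2 * m + 1 : ℕ) : ℤ) - 2 * (m + 1 + 0 : ℕ) = -1 by push_cast; ring, S_neg_one,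
        mul_zero]
    rw [sum_range_succ', hmid, add_zero, ← sum_neg_distrib]
    refine sum_congr rfl fun r hr => ?_
    have hr : r < m := mem_range.mp hr
    simp only [f]
    rw [Nat.choose_symm_of_eq_add (show 2 * m + 1 = (m + 1 + (r + 1)) + (m - r - 1) by omega),
      show ((2 * m + 1 : ℕ) : ℤ) - 2 * (m + 1 + (r + 1) : ℕ) = -(2 * r + 1) - 2 by push_cast; ring,
      S_neg_sub_two, mul_neg]
  rw [X_pow_eq_sum_range_choose_mul_S, show 2 * m + 1 + 1 = (m + 1) + (m + 1) by ring,
    sum_range_add, hlow, hhigh, sub_eq_add_neg]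

theorem S_eval_eq_of_recurrence (b : ℕ → R) (hb0 : b 0 = 1)
    (hrec : ∀ r : ℕ, 1 ≤ r → b 1 * b r = b (r + 1) + b (r - 1)) (n : ℕ) :
    (S R n).eval (b 1) = b n := by
  induction n using Nat.twoStepInduction with
  | zero => simp [hb0]
  | one => simp
  | more n ih₀ ih₁ =>
    have h := hrec (n + 1) le_add_self
    push_cast at ih₁ ⊢
    rw [S_add_two, eval_sub, eval_mul, eval_X, ih₀, ih₁, h]
    simp

end Polynomial.Chebyshev

theorem binomC_natCast (n k : ℕ) : binomC n k = n.choose k := by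
  simp [binomC]

theorem binomC_of_neg (n : ℕ) {j : ℤ} (hj : j < 0) : binomC n j = 0 :=
  if_pos hj

theorem sum_range_binomC_sub_binomC_mul (n m : ℕ) (g : ℕ → ℝ) :
    ∑ r ∈ range (m + 1), (binomC n ((m : ℤ) - r) - binomC n ((m : ℤ) - r - 1)) * g r =
      ∑ r ∈ range (m + 1), (n.choose (m - r) : ℝ) * g r -
        ∑ r ∈ range m, (n.choose (m - r - 1) : ℝ) * g r := by
  simp only [sub_mul, sum_sub_distrib]
  rw [sum_range_succ (fun r => binomC n ((m : ℤ) - r - 1) * g r),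
    binomC_of_neg n (by omega : (m : ℤ) - m - 1 < 0), zero_mul, add_zero]
  congr 1 <;> refine sum_congr rfl fun r hr => ?_ <;> have := mem_range.mp hr
  · rw [← binomC_natCast, Nat.cast_sub (by omega)]
  · rw [← binomC_natCast, Nat.cast_sub (by omega), Nat.cast_sub (by omega), Nat.cast_one]

theorem odd_power_hecke_expansion (b : ℕ → ℝ) (hb0 : b 0 = 1)
    (hrec : ∀ r : ℕ, 1 ≤ r → b 1 * b r = b (r + 1) + b (r - 1)) :
    ∀ m : ℕ, (b 1) ^ (2 * m + 1) =
      ∑ r ∈ Finset.range (m + 1),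
        (binomC (2 * m + 1) ((m : ℤ) - (r : ℤ)) - binomC (2 * m + 1) ((m : ℤ) - (r : ℤ) - 1)) *
          b (2 * r + 1) := by
  intro m
  have hS (r : ℕ) : (S ℝ (2 * r + 1)).eval (b 1) = b (2 * r + 1) := by
    exact_mod_cast S_eval_eq_of_recurrence b hb0 hrec (2 * r + 1)
  rw [sum_range_binomC_sub_binomC_mul, ← eval_X (x := b 1), ← eval_pow, X_pow_two_mul_add_one_eq]
  simp only [eval_sub, eval_finsetSum, eval_mul, eval_natCast, hS]
end
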